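/- Let T be a tree. A colouring c of T is walk-nonrepetitive if and only if c is both path-nonrepetitive and distance-2. -/

import Mathlib

open SimpleGraph

/-- `v 0, v 1, …, v (n-1)` is a walk in `G` (consecutive vertices are adjacent). -/
def IsWalkSeq {V : Type} (G : SimpleGraph V) (n : ℕ) (v : ℕ → V) : Prop :=
  ∀ i : ℕ, i + 1 < n → G.Adj (v i) (v (i + 1))

/-- `v 0, …, v (n-1)` is a path in `G` (a walk with pairwise distinct vertices). -/
def IsPathSeq {V : Type} (G : SimpleGraph V) (n : ℕ) (v : ℕ → V) : Prop :=
  IsWalkSeq G n v ∧ ∀ i < n, ∀ j < n, v i = v j → i = j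

/-- The walk `v 0, …, v (2t-1)` is repetitively coloured by `f`. -/
def RepetitivelyColoured {V C : Type} (f : V → C) (t : ℕ) (v : ℕ → V) : Prop :=
  ∀ i < t, f (v i) = f (v (t + i))

/-- The walk `v 0, …, v (2t-1)` is boring. -/
def BoringWalk {V : Type} (t : ℕ) (v : ℕ → V) : Prop :=
  ∀ i < t, v i = v (t + i)

/-- A colouring is nonrepetitive on walks: every repetitively coloured walk is boring. -/
def WalkNonrepetitive {V C : Type} (G : SimpleGraph V) (f : V → C) : Prop :=
  ∀ (t : ℕ) (v : ℕ → V), IsWalkSeq G (2 * t) v → RepetitivelyColoured f t v → BoringWalk t v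

/-- A colouring is nonrepetitive on paths: no (nonempty) path is repetitively coloured. -/
def PathNonrepetitive {V C : Type} (G : SimpleGraph V) (f : V → C) : Prop :=
  ∀ (t : ℕ) (v : ℕ → V), 0 < t → IsPathSeq G (2 * t) v → ¬ RepetitivelyColoured f t v

/-- A distance-2 colouring: distinct vertices at distance at most 2 get distinct colours. -/
def Distance2Coloring {V C : Type} (G : SimpleGraph V) (f : V → C) : Prop :=
  ∀ u w : V, u ≠ w → (G.Adj u w ∨ ∃ x, G.Adj u x ∧ G.Adj x w) → f u ≠ f w

/-- σ(G): the minimum number of colours in a walk-nonrepetitive colouring of `G`. -/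
noncomputable def sigmaNR {V : Type} (G : SimpleGraph V) : ℕ :=
  sInf {k | ∃ f : V → Fin k, WalkNonrepetitive G f}

/-- π(G): the minimum number of colours in a path-nonrepetitive colouring of `G`. -/
noncomputable def piNR {V : Type} (G : SimpleGraph V) : ℕ :=
  sInf {k | ∃ f : V → Fin k, PathNonrepetitive G f}

/-- The square graph `G²`: distinct vertices at distance at most 2 are adjacent. -/
def squareGraph {V : Type} (G : SimpleGraph V) : SimpleGraph V where
  Adj u w := u ≠ w ∧ (G.Adj u w ∨ ∃ x, G.Adj u x ∧ G.Adj x w)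
  symm := by
    refine ⟨?_⟩
    rintro u w ⟨h1, h2⟩
    refine ⟨h1.symm, ?_⟩
    rcases h2 with h | ⟨x, hx1, hx2⟩
    · exact Or.inl h.symm
    · exact Or.inr ⟨x, hx2.symm, hx1.symm⟩
  loopless := ⟨by rintro u ⟨h, -⟩; exact h rfl⟩

/-- A levelling of `G`: levels of adjacent vertices differ by at most 1. -/
def IsLevelling {V : Type} (G : SimpleGraph V) (lam : V → ℤ) : Prop :=
  ∀ u w : V, G.Adj u w → |lam u - lam w| ≤ 1

/-- A levelling is shadow-complete if, for every `k`, the `k`-shadow of every connected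
component of `G_{λ>k}` induces a clique: if `u` and `w` are on level `k` and each has a
neighbour in the same component of `G_{λ>k}`, then `u = w` or `u` and `w` are adjacent. -/
def ShadowComplete {V : Type} (G : SimpleGraph V) (lam : V → ℤ) : Prop :=
  ∀ (k : ℤ) (u w : V), lam u = k → lam w = k →
    (∃ (x y : {v : V | k < lam v}), G.Adj u x.1 ∧ G.Adj w y.1 ∧
      (G.induce {v : V | k < lam v}).Reachable x y) →
    u = w ∨ G.Adj u w

/-- The number of distinct vertices of the walk `v 0, …, v (n-1)`. -/
def walkOrder {V : Type} [DecidableEq V] (n : ℕ) (v : ℕ → V) : ℕ :=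
  ((Finset.range n).image v).card

/-- `G` has a tree-partition in which every bag has at most `ℓ` vertices:
the vertices are mapped to the nodes of a forest so that the bags (preimages)
have at most `ℓ` vertices each, and adjacent vertices of `G` lie in the same bag
or in bags corresponding to adjacent nodes of the forest. -/
def HasTreePartition {V : Type} (G : SimpleGraph V) (ℓ : ℕ) : Prop :=
  ∃ (B : Type) (F : SimpleGraph B) (b : V → B),
    F.IsAcyclic ∧
    (∀ u w : V, G.Adj u w → b u = b w ∨ F.Adj (b u) (b w)) ∧
    (∀ x : B, {v : V | b v = x}.ncard ≤ ℓ)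

section Aux

open SimpleGraph

variable {V : Type} {T : SimpleGraph V}

/-- In a tree, adjacent vertices are at different distances from any vertex. -/
lemma tree_dist_ne (hT : T.IsTree) (a : V) {x y : V} (hxy : T.Adj x y) :
    T.dist x a ≠ T.dist y a := by
  classical
  intro h
  obtain ⟨p, hp, hlen⟩ := (hT.isConnected.exists_path_of_dist y a)
  have hx : x ∉ p.support := by
    intro hx
    have h1 : T.dist x a ≤ (p.dropUntil x hx).length := SimpleGraph.dist_le _
    have h2 : (p.takeUntil x hx).length + (p.dropUntil x hx).length = p.length := by
      rw [← SimpleGraph.Walk.length_append, p.take_spec hx]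
    have h3 : (p.takeUntil x hx).length = 0 := by omega
    exact hxy.ne (SimpleGraph.Walk.eq_of_length_eq_zero h3).symm
  have hpath1 : (p.cons hxy).IsPath := hp.cons hx
  obtain ⟨q, hq, hqlen⟩ := (hT.isConnected.exists_path_of_dist x a)
  have heq : p.cons hxy = q := ((hT.existsUnique_path x a).unique hpath1 hq)
  have := congrArg SimpleGraph.Walk.length heq
  rw [SimpleGraph.Walk.length_cons] at this
  omega

/-- In a tree, a vertex has a unique neighbour strictly closer to a given vertex. -/
lemma tree_parent_unique (hT : T.IsTree) (a : V) {x y z : V}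
    (hxy : T.Adj x y) (hxz : T.Adj x z)
    (hy : T.dist y a < T.dist x a) (hz : T.dist z a < T.dist x a) : y = z := by
  classical
  obtain ⟨p, hp, hplen⟩ := (hT.isConnected.exists_path_of_dist y a)
  obtain ⟨q, hq, hqlen⟩ := (hT.isConnected.exists_path_of_dist z a)
  have hxp : x ∉ p.support := by
    intro hx
    have h1 : T.dist x a ≤ (p.dropUntil x hx).length := SimpleGraph.dist_le _
    have h2 : (p.dropUntil x hx).length ≤ p.length := SimpleGraph.Walk.length_dropUntil_le p hx
    omega
  have hxq : x ∉ q.support := by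
    intro hx
    have h1 : T.dist x a ≤ (q.dropUntil x hx).length := SimpleGraph.dist_le _
    have h2 : (q.dropUntil x hx).length ≤ q.length := SimpleGraph.Walk.length_dropUntil_le q hx
    omega
  have hpath1 : (p.cons hxy).IsPath := hp.cons hxp
  have hpath2 : (q.cons hxz).IsPath := hq.cons hxq
  have heq : p.cons hxy = q.cons hxz := (hT.existsUnique_path x a).unique hpath1 hpath2
  have := congrArg (fun w : T.Walk x a => w.getVert 1) heq
  simpa [SimpleGraph.Walk.getVert_cons] using this

/-- A walk in a tree with a repeated vertex contains a spike. -/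
lemma tree_spike (hT : T.IsTree) (v : ℕ → V) (n a b : ℕ)
    (hw : IsWalkSeq T n v) (hab : a < b) (hbn : b < n) (heq : v a = v b) :
    ∃ s, a ≤ s ∧ s + 2 ≤ b ∧ v s = v (s + 2) := by
  have hadj : ∀ i, a ≤ i → i + 1 ≤ b → T.Adj (v i) (v (i+1)) := fun i _ h2 => hw i (by omega)
  have hab2 : a + 2 ≤ b := by
    rcases Nat.lt_or_ge (a+1) b with h | h
    · omega
    · have hb1 : b = a + 1 := by omega
      have := hadj a (le_refl a) (by omega)
      rw [← hb1, ← heq] at this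
      exact absurd rfl this.ne
  obtain ⟨m, hm, hmax⟩ := Finset.exists_max_image (Finset.Icc a b) (fun i => T.dist (v i) (v a))
    ⟨a, by simp [Finset.mem_Icc]; omega⟩
  rw [Finset.mem_Icc] at hm
  have hD1 : 1 ≤ T.dist (v m) (v a) := by
    have h1 : T.dist (v (a+1)) (v a) = 1 :=
      SimpleGraph.dist_eq_one_iff_adj.mpr (hadj a le_rfl (by omega)).symm
    have := hmax (a+1) (by rw [Finset.mem_Icc]; omega)
    omega
  have hma : m ≠ a := by
    intro h; rw [h] at hD1; simp [SimpleGraph.dist_self] at hD1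
  have hmb : m ≠ b := by
    intro h; rw [h, ← heq] at hD1; simp [SimpleGraph.dist_self] at hD1
  obtain ⟨s, rfl⟩ : ∃ s, m = s + 1 := ⟨m - 1, by omega⟩
  have hsa : a ≤ s := by omega
  have hsb : s + 2 ≤ b := by omega
  have hadj1 : T.Adj (v (s+1)) (v s) := (hadj s hsa (by omega)).symm
  have hadj2 : T.Adj (v (s+1)) (v (s+2)) := hadj (s+1) (by omega) hsb
  have hlt1 : T.dist (v s) (v a) < T.dist (v (s+1)) (v a) := by
    have hle := hmax s (by rw [Finset.mem_Icc]; omega)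
    have hne := tree_dist_ne hT (v a) hadj1.symm
    omega
  have hlt2 : T.dist (v (s+2)) (v a) < T.dist (v (s+1)) (v a) := by
    have hle := hmax (s+2) (by rw [Finset.mem_Icc]; omega)
    have hne := tree_dist_ne hT (v a) hadj2
    omega
  exact ⟨s, hsa, hsb, tree_parent_unique hT (v a) hadj1 hadj2 hlt1 hlt2⟩

end Aux

/-- Let `T` be a tree. A colouring `c` of `T` is walk-nonrepetitive if and only if `c` is both
path-nonrepetitive and distance-2. -/
theorem stmt5 {V C : Type} [Fintype V] (T : SimpleGraph V) (hT : T.IsTree) (c : V → C) :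
    WalkNonrepetitive T c ↔ PathNonrepetitive T c ∧ Distance2Coloring T c := by
  constructor
  · intro hW
    constructor
    · intro t v ht hps hrep
      have hb := hW t v hps.1 hrep
      have h0 := hb 0 (by omega)
      have := hps.2 0 (by omega) (t + 0) (by omega) h0
      omega
    · intro u w hne hcond hceq
      rcases hcond with hadj | ⟨x, hux, hxw⟩
      · have hb := hW 1 (fun i => if i = 0 then u else w)
          (by intro i hi
              have : i = 0 := by omega
              subst this
              simpa using hadj)
          (by intro i hi
              have : i = 0 := by omega
              subst this
              simpa using hceq)
        have := hb 0 (by omega)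
        simp at this
        exact hne this
      · have hb := hW 2 (fun i => if i = 0 then u else if i = 2 then w else x)
          (by intro i hi
              have h3 : i = 0 ∨ i = 1 ∨ i = 2 := by omega
              rcases h3 with rfl | rfl | rfl
              · simpa using hux
              · simpa using hxw
              · simpa using hxw.symm)
          (by intro i hi
              have h2 : i = 0 ∨ i = 1 := by omega
              rcases h2 with rfl | rfl
              · simpa using hceq
              · simp)
        have := hb 0 (by omega)
        simp at this
        exact hne this
  · rintro ⟨hP, hD⟩
    intro t
    induction t using Nat.strong_induction_on with
    | _ t IH =>
    intro v hw hr
    -- one synchronised equality forces boringness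
    have hA : (∃ k, k < t ∧ v k = v (t + k)) → BoringWalk t v := by
      rintro ⟨k, hk, hvk⟩
      have fwd : ∀ j, j + 1 < t → v j = v (t + j) → v (j+1) = v (t + (j+1)) := by
        intro j hj hvj
        by_contra hne
        refine hD (v (j+1)) (v (t + (j+1))) hne
          (Or.inr ⟨v j, (hw j (by omega)).symm, ?_⟩) (hr (j+1) (by omega))
        rw [hvj]
        have := hw (t + j) (by omega)
        exact this
      have bwd : ∀ j, j + 1 < t → v (j+1) = v (t + (j+1)) → v j = v (t + j) := by
        intro j hj hvj
        by_contra hne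
        refine hD (v j) (v (t + j)) hne
          (Or.inr ⟨v (j+1), hw j (by omega), ?_⟩) (hr j (by omega))
        rw [hvj]
        have := (hw (t + j) (by omega)).symm
        exact this
      have up : ∀ i, k ≤ i → i < t → v i = v (t + i) := by
        intro i hki
        induction i, hki using Nat.le_induction with
        | base => intro _; exact hvk
        | succ i hki ih => intro hi; exact fwd i hi (ih (by omega))
      have down : ∀ d, d ≤ k → v (k - d) = v (t + (k - d)) := by
        intro d
        induction d with
        | zero => intro _; simpa using hvk
        | succ d ih =>
          intro hd
          have h1 := ih (by omega)
          have h2 : k - d = (k - (d+1)) + 1 := by omega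
          rw [h2] at h1
          exact bwd (k - (d+1)) (by omega) h1
      intro i hi
      rcases le_or_gt k i with h | h
      · exact up i h hi
      · have := down (k - i) (by omega)
        rw [show k - (k - i) = i from by omega] at this
        exact this
    -- the key reduction: a spike at s together with its mirror at t+s
    have key : ∀ s, s + 3 ≤ t → v s = v (s+2) → v (t+s) = v (t+s+2) → BoringWalk t v := by
      intro s hst hsp hmir
      set u : ℕ → V := fun i => if i < s+1 then v i else if i < t-1+s then v (i+2) else v (i+4)
        with hu
      have hu1 : ∀ i, i < s+1 → u i = v i := by
        intro i h; simp only [hu]; rw [if_pos h]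
      have hu2 : ∀ i, s+1 ≤ i → i < t-1+s → u i = v (i+2) := by
        intro i h1 h2; simp only [hu]; rw [if_neg (by omega), if_pos h2]
      have hu3 : ∀ i, t-1+s ≤ i → u i = v (i+4) := by
        intro i h; simp only [hu]; rw [if_neg (by omega), if_neg (by omega)]
      have hw' : IsWalkSeq T (2*(t-2)) u := by
        intro i hi
        rcases lt_trichotomy (i+1) (s+1) with h | h | h
        · rw [hu1 i (by omega), hu1 (i+1) h]
          exact hw i (by omega)
        · have hieq : i = s := by omega
          subst hieq
          rw [hu1 i (by omega), hu2 (i+1) (by omega) (by omega)]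
          rw [hsp]
          have := hw (i+2) (by omega)
          exact this
        · rcases lt_trichotomy (i+1) (t-1+s) with h2 | h2 | h2
          · rw [hu2 i (by omega) (by omega), hu2 (i+1) (by omega) h2]
            exact hw (i+2) (by omega)
          · rw [hu2 i (by omega) (by omega), hu3 (i+1) (by omega)]
            rw [show i+2 = t+s from by omega, show i+1+4 = t+s+3 from by omega, hmir]
            have := hw (t+s+2) (by omega)
            exact this
          · rw [hu3 i (by omega), hu3 (i+1) (by omega)]
            exact hw (i+4) (by omega)
      have hr' : RepetitivelyColoured c (t-2) u := by
        intro i hi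
        rcases lt_or_ge i (s+1) with h | h
        · rw [hu1 i h, hu2 (t-2+i) (by omega) (by omega)]
          rw [show t-2+i+2 = t+i from by omega]
          exact hr i (by omega)
        · rw [hu2 i (by omega) (by omega), hu3 (t-2+i) (by omega)]
          rw [show t-2+i+4 = t+(i+2) from by omega]
          exact hr (i+2) (by omega)
      have hb := IH (t-2) (by omega) u hw' hr'
      have h0 := hb 0 (by omega)
      rw [hu1 0 (by omega), hu2 (t-2+0) (by omega) (by omega)] at h0
      rw [show t-2+0+2 = t+0 from by omega] at h0
      exact hA ⟨0, by omega, h0⟩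
    -- main case analysis
    by_cases hinj : ∀ i, i < 2*t → ∀ j, j < 2*t → v i = v j → i = j
    · rcases Nat.eq_zero_or_pos t with rfl | ht
      · intro i hi; omega
      · exact absurd hr (hP t v ht ⟨hw, fun i hi j hj => hinj i hi j hj⟩)
    · push_neg at hinj
      obtain ⟨i, hi, j, hj, hvij, hij⟩ := hinj
      obtain ⟨a, b, hab, hb, heq⟩ : ∃ a b, a < b ∧ b < 2*t ∧ v a = v b := by
        rcases Nat.lt_or_ge i j with h | h
        · exact ⟨i, j, h, hj, hvij⟩
        · exact ⟨j, i, by omega, hi, hvij.symm⟩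
      obtain ⟨s, hsa, hsb, hsp⟩ := tree_spike hT v (2*t) a b hw hab hb heq
      have hs2t : s + 2 < 2*t := by omega
      have hcases : s + 3 ≤ t ∨ s + 2 = t ∨ s + 1 = t ∨ t ≤ s := by omega
      rcases hcases with hc | hc | hc | hc
      · -- interior spike in the first half: derive the mirrored spike
        have hmir : v (t+s) = v (t+s+2) := by
          by_contra hne
          refine hD (v (t+s)) (v (t+s+2)) hne
            (Or.inr ⟨v (t+s+1), hw (t+s) (by omega), hw (t+s+1) (by omega)⟩) ?_
          have h1 := hr s (by omega)
          have h2 := hr (s+2) (by omega)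
          rw [show t+(s+2) = t+s+2 from by omega] at h2
          rw [← h1, ← h2, hsp]
        exact key s hc hsp hmir
      · -- spike v (t-2) = v t
        obtain rfl : t = s + 2 := by omega
        rcases Nat.eq_zero_or_pos s with rfl | hs1
        · exact hA ⟨0, by omega, by simpa using hsp⟩
        · set u : ℕ → V := fun i => if i < s then v i else v (i+2) with hu
          have hu1 : ∀ i, i < s → u i = v i := by
            intro i h; simp only [hu]; rw [if_pos h]
          have hu2 : ∀ i, s ≤ i → u i = v (i+2) := by
            intro i h; simp only [hu]; rw [if_neg (by omega)]
          have hw' : IsWalkSeq T (2*s) u := by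
            intro i hi
            rcases lt_trichotomy (i+1) s with h | h | h
            · rw [hu1 i (by omega), hu1 (i+1) h]
              exact hw i (by omega)
            · rw [hu1 i (by omega), hu2 (i+1) (by omega)]
              rw [show i+1+2 = s+2 from by omega, ← hsp]
              have := hw i (by omega)
              convert this using 2
              omega
            · rw [hu2 i (by omega), hu2 (i+1) (by omega)]
              exact hw (i+2) (by omega)
          have hr' : RepetitivelyColoured c s u := by
            intro i hi
            rw [hu1 i hi, hu2 (s+i) (by omega)]
            rw [show s+i+2 = (s+2)+i from by omega]
            exact hr i (by omega)
          have hb := IH s (by omega) u hw' hr'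
          have h0 := hb 0 (by omega)
          rw [hu1 0 (by omega), hu2 (s+0) (by omega)] at h0
          rw [show s+0+2 = (s+2)+0 from by omega] at h0
          exact hA ⟨0, by omega, h0⟩
      · -- spike v (t-1) = v (t+1)
        obtain rfl : t = s + 1 := by omega
        rcases Nat.lt_or_ge s 2 with hs1 | hs1
        · obtain rfl : s = 1 := by omega
          exact hA ⟨1, by omega, by simpa using hsp⟩
        · obtain ⟨r, rfl⟩ : ∃ r, s = r + 2 := ⟨s - 2, by omega⟩
          set u : ℕ → V := fun i => if i < r+1 then v (i+2) else v (i+4) with hu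
          have hu1 : ∀ i, i < r+1 → u i = v (i+2) := by
            intro i h; simp only [hu]; rw [if_pos h]
          have hu2 : ∀ i, r+1 ≤ i → u i = v (i+4) := by
            intro i h; simp only [hu]; rw [if_neg (by omega)]
          have hw' : IsWalkSeq T (2*(r+1)) u := by
            intro i hi
            rcases lt_trichotomy (i+1) (r+1) with h | h | h
            · rw [hu1 i (by omega), hu1 (i+1) h]
              exact hw (i+2) (by omega)
            · rw [hu1 i (by omega), hu2 (i+1) (by omega)]
              rw [show i+2 = r+2 from by omega, hsp]
              rw [show i+1+4 = (r+4)+1 from by omega]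
              exact hw (r+4) (by omega)
            · rw [hu2 i (by omega), hu2 (i+1) (by omega)]
              exact hw (i+4) (by omega)
          have hr' : RepetitivelyColoured c (r+1) u := by
            intro i hi
            rw [hu1 i hi, hu2 (r+1+i) (by omega)]
            rw [show r+1+i+4 = (r+3)+(i+2) from by omega]
            exact hr (i+2) (by omega)
          have hb := IH (r+1) (by omega) u hw' hr'
          have h0 := hb 0 (by omega)
          rw [hu1 0 (by omega), hu2 (r+1+0) (by omega)] at h0
          rw [show r+1+0+4 = (r+3)+2 from by omega] at h0
          exact hA ⟨2, by omega, h0⟩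
      · -- spike in the second half: derive the downstairs spike
        obtain ⟨s', rfl⟩ : ∃ s', s = t + s' := ⟨s - t, by omega⟩
        have hst : s' + 3 ≤ t := by omega
        have hsp' : v s' = v (s'+2) := by
          by_contra hne
          refine hD (v s') (v (s'+2)) hne
            (Or.inr ⟨v (s'+1), hw s' (by omega), hw (s'+1) (by omega)⟩) ?_
          have h1 := hr s' (by omega)
          have h2 := hr (s'+2) (by omega)
          rw [show t+(s'+2) = (t+s')+2 from by omega] at h2
          rw [h1, h2, hsp]
        exact key s' hst hsp' (by simpa using hsp)
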